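/- arXiv:2511.23282 — 3 statements merged into one kernel-verified Lean document; each statement's English description precedes it below -/
import Mathlib

section
/- Let Z be a nonempty finite type, E a real normed vector space, g : Z → E, and let p, q : Z → ℝ satisfy p z ≥ 0 and q z > 0 for all z, with ∑_z p z = 1 and ∑_z q z = 1. Then ‖∑_z (p z − q z) • g z‖ ≤ (max_z ‖g z‖) · √(2 · ∑_z p z · log(p z / q z)), where the term p z · log(p z / q z) is interpreted as 0 when p z = 0. -/
/-!
Pinsker's inequality `(∑ |p - q|)² ≤ 2 KL(p‖q)` comes from Sedrakyan's form of Cauchy–Schwarz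
with weights `2p + 4q` (total mass 6) and the pointwise bound `3 (x - 1)² ≤ (2x + 4) klFun x`,
applied at `x = p / q`: `q · klFun (p / q) = p log (p / q) - p + q`, and these terms sum to the
KL divergence. The triangle inequality then bounds `‖∑ (p - q) • g‖` by `max ‖g‖ · ∑ |p - q|`.
-/

open Real Set InformationTheory

lemma hasDerivAt_add_one_mul_log_sub {x : ℝ} (hx : 0 < x) :
    HasDerivAt (fun y ↦ (y + 1) * log y - 2 * (y - 1)) (log x + x⁻¹ - 1) x := by
  have h := (((hasDerivAt_id x).add_const 1).mul (hasDerivAt_log hx.ne')).sub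
    (((hasDerivAt_id x).sub_const 1).const_mul 2)
  refine h.congr_deriv ?_
  simp only [id]
  field_simp
  ring

lemma monotoneOn_add_one_mul_log_sub :
    MonotoneOn (fun x ↦ (x + 1) * log x - 2 * (x - 1)) (Ioi 0) := by
  refine monotoneOn_of_hasDerivWithinAt_nonneg (convex_Ioi 0)
    (fun x hx ↦ (hasDerivAt_add_one_mul_log_sub hx).continuousAt.continuousWithinAt)
    (fun x hx ↦ (hasDerivAt_add_one_mul_log_sub (interior_subset hx)).hasDerivWithinAt)
    fun x hx ↦ ?_
  linarith [one_sub_inv_le_log_of_pos (interior_subset hx : (0 : ℝ) < x)]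

lemma hasDerivAt_mul_klFun_sub_three_mul_sq {x : ℝ} (hx : x ≠ 0) :
    HasDerivAt (fun y ↦ (2 * y + 4) * klFun y - 3 * (y - 1) ^ 2)
      (4 * ((x + 1) * log x - 2 * (x - 1))) x := by
  have h := ((((hasDerivAt_id x).const_mul 2).add_const 4).mul (hasDerivAt_klFun hx)).sub
    ((((hasDerivAt_id x).sub_const 1).pow 2).const_mul 3)
  refine h.congr_deriv ?_
  simp only [klFun_apply, id]
  ring

lemma three_mul_sq_sub_one_le_mul_klFun {x : ℝ} (hx : 0 ≤ x) :
    3 * (x - 1) ^ 2 ≤ (2 * x + 4) * klFun x := by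
  set F : ℝ → ℝ := fun y ↦ (2 * y + 4) * klFun y - 3 * (y - 1) ^ 2 with hF_def
  set G : ℝ → ℝ := fun y ↦ (y + 1) * log y - 2 * (y - 1) with hG_def
  have hF : Continuous F := by have := continuous_klFun; fun_prop
  have hF' : ∀ y, 0 < y → HasDerivAt F (4 * G y) y :=
    fun y hy ↦ hasDerivAt_mul_klFun_sub_three_mul_sq (ne_of_gt hy)
  have hG : MonotoneOn G (Ioi 0) := monotoneOn_add_one_mul_log_sub
  have hG1 : G 1 = 0 := by simp [hG_def]
  have one_mem : (1 : ℝ) ∈ Ioi 0 := mem_Ioi.2 one_pos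
  have hmin : IsMinOn F (Ici 0) 1 := isMinOn_Ici_of_deriv hF.continuousAt hF.continuousAt
    (fun y hy ↦ (hF' y hy.1).differentiableAt.differentiableWithinAt)
    (fun y hy ↦ (hF' y (one_pos.trans hy)).differentiableAt.differentiableWithinAt)
    (fun y hy ↦ by
      rw [(hF' y hy.1).deriv]
      linarith [hG hy.1 one_mem hy.2.le])
    (fun y hy ↦ by
      have hy0 : 0 < y := one_pos.trans hy
      rw [(hF' y hy0).deriv]
      linarith [hG one_mem hy0 hy.le])
  have := hmin (mem_Ici.2 hx)
  simp only [hF_def, klFun_one, mem_ofPred_eq] at this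
  linarith

lemma three_mul_sq_sub_le_mul_log_div {p q : ℝ} (hp : 0 ≤ p) (hq : 0 < q) :
    3 * (p - q) ^ 2 ≤ (2 * p + 4 * q) * (p * log (p / q) - p + q) := by
  have h := mul_le_mul_of_nonneg_right
    (three_mul_sq_sub_one_le_mul_klFun (div_nonneg hp hq.le)) (sq_nonneg q)
  rw [klFun_apply] at h
  have hq0 : q ≠ 0 := hq.ne'
  calc 3 * (p - q) ^ 2 = 3 * (p / q - 1) ^ 2 * q ^ 2 := by field_simp
    _ ≤ (2 * (p / q) + 4) * (p / q * log (p / q) + 1 - p / q) * q ^ 2 := h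
    _ = (2 * p + 4 * q) * (p * log (p / q) - p + q) := by field_simp; ring

lemma sq_sum_abs_sub_le_two_mul_sum_mul_log_div {ι : Type*} (s : Finset ι) {p q : ι → ℝ}
    (hp : ∀ i ∈ s, 0 ≤ p i) (hq : ∀ i ∈ s, 0 < q i)
    (hps : ∑ i ∈ s, p i = 1) (hqs : ∑ i ∈ s, q i = 1) :
    (∑ i ∈ s, |p i - q i|) ^ 2 ≤ 2 * ∑ i ∈ s, p i * log (p i / q i) := by
  have hw : ∀ i ∈ s, 0 < 2 * p i + 4 * q i := fun i hi ↦ by linarith [hp i hi, hq i hi]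
  have hws : ∑ i ∈ s, (2 * p i + 4 * q i) = 6 := by
    rw [Finset.sum_add_distrib, ← Finset.mul_sum, ← Finset.mul_sum, hps, hqs]
    norm_num
  have hkl : ∑ i ∈ s, (p i * log (p i / q i) - p i + q i) = ∑ i ∈ s, p i * log (p i / q i) := by
    rw [Finset.sum_add_distrib, Finset.sum_sub_distrib, hps, hqs, sub_add_cancel]
  have titu := Finset.sq_sum_div_le_sum_sq_div s (fun i ↦ |p i - q i|) hw
  rw [hws] at titu
  have pointwise : ∀ i ∈ s, |p i - q i| ^ 2 / (2 * p i + 4 * q i)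
      ≤ (p i * log (p i / q i) - p i + q i) / 3 := fun i hi ↦ by
    rw [sq_abs, div_le_div_iff₀ (hw i hi) three_pos]
    linarith [three_mul_sq_sub_le_mul_log_div (hp i hi) (hq i hi)]
  calc (∑ i ∈ s, |p i - q i|) ^ 2 ≤ 6 * ∑ i ∈ s, |p i - q i| ^ 2 / (2 * p i + 4 * q i) := by
        linarith [(div_le_iff₀' (by norm_num : (0 : ℝ) < 6)).1 titu]
    _ ≤ 6 * ∑ i ∈ s, (p i * log (p i / q i) - p i + q i) / 3 :=
        mul_le_mul_of_nonneg_left (Finset.sum_le_sum pointwise) (by norm_num)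
    _ = 2 * ∑ i ∈ s, p i * log (p i / q i) := by
        rw [← Finset.sum_div, hkl]; ring

lemma norm_sum_smul_le_sup'_mul_sum_abs {ι E : Type*} [NormedAddCommGroup E] [NormedSpace ℝ E]
    (s : Finset ι) (hs : s.Nonempty) (a : ι → ℝ) (g : ι → E) :
    ‖∑ i ∈ s, a i • g i‖ ≤ (s.sup' hs fun i ↦ ‖g i‖) * ∑ i ∈ s, |a i| := by
  rw [Finset.mul_sum]
  refine (norm_sum_le _ _).trans (Finset.sum_le_sum fun i hi ↦ ?_)
  rw [norm_smul, Real.norm_eq_abs, mul_comm]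
  exact mul_le_mul_of_nonneg_right (Finset.le_sup' (fun i ↦ ‖g i‖) hi) (abs_nonneg _)

/-- Corrected form of step (37)–(A-1) in the proof of Lemma 1: the norm of the
difference of probability-weighted gradient aggregates is bounded by the largest
per-sample gradient norm times √(2·D_KL(p‖q)). -/
theorem stmt_3 {Z : Type*} [Fintype Z] [Nonempty Z]
    {E : Type*} [NormedAddCommGroup E] [NormedSpace ℝ E]
    (g : Z → E) (p q : Z → ℝ) (hp : ∀ z, 0 ≤ p z) (hq : ∀ z, 0 < q z)
    (hps : ∑ z, p z = 1) (hqs : ∑ z, q z = 1) :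
    ‖∑ z, (p z - q z) • g z‖ ≤
      (Finset.univ.sup' Finset.univ_nonempty fun z => ‖g z‖) *
        Real.sqrt (2 * ∑ z, p z * Real.log (p z / q z)) := by
  have pinsker := sq_sum_abs_sub_le_two_mul_sum_mul_log_div Finset.univ
    (fun z _ ↦ hp z) (fun z _ ↦ hq z) hps hqs
  have hM : 0 ≤ Finset.univ.sup' Finset.univ_nonempty fun z => ‖g z‖ :=
    (norm_nonneg _).trans
      (Finset.le_sup' (fun z => ‖g z‖) (Finset.mem_univ (Classical.arbitrary Z)))
  refine (norm_sum_smul_le_sup'_mul_sum_abs _ _ _ g).trans (mul_le_mul_of_nonneg_left ?_ hM)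
  exact (le_abs_self _).trans (Real.abs_le_sqrt pinsker)
end

section
/- Let (Ω, μ) be a probability space, E a real Hilbert space, and G : Ω → E a Bochner integrable function such that ω ↦ ‖G ω‖² is integrable. Let u = ∫ G dμ, let v ∈ E, and let η ∈ ℝ and c ≥ 0 be reals with ‖v − u‖ ≤ c·‖u‖. Then ∫ η·⟪G ω, v − u⟫ dμ(ω) ≤ (1/2)·(η² + c²)·∫ ‖G ω‖² dμ(ω). -/
open MeasureTheory

/-!
By linearity of the integral the left-hand side is `η ⟪u, v - u⟫`. Cauchy–Schwarz and the hypothesis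
bound it by `|η| c ‖u‖²`, AM–GM gives `|η| c ≤ (η² + c²) / 2`, and Jensen's inequality for the convex
function `‖·‖²` gives `‖u‖² ≤ ∫ ‖G‖²`.
-/

theorem sq_norm_integral_le_integral_sq_norm {Ω : Type*} [MeasurableSpace Ω] {μ : Measure Ω}
    [IsProbabilityMeasure μ] {E : Type*} [NormedAddCommGroup E] [NormedSpace ℝ E]
    [CompleteSpace E] {G : Ω → E} (hG : Integrable G μ)
    (hG2 : Integrable (fun ω => ‖G ω‖ ^ 2) μ) :
    ‖∫ ω, G ω ∂μ‖ ^ 2 ≤ ∫ ω, ‖G ω‖ ^ 2 ∂μ :=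
  (convexOn_univ_norm.pow (fun _ _ => norm_nonneg _) 2).map_integral_le
    (continuous_norm.pow 2).continuousOn isClosed_univ (by simp) hG hG2

theorem mul_inner_le_of_norm_le_mul_norm {E : Type*} [NormedAddCommGroup E]
    [InnerProductSpace ℝ E] {u w : E} {c : ℝ} (h : ‖w‖ ≤ c * ‖u‖) (η : ℝ) :
    η * inner ℝ u w ≤ (1/2) * (η^2 + c^2) * ‖u‖^2 :=
  calc η * inner ℝ u w ≤ |η| * (‖u‖ * ‖w‖) :=
        (le_abs_self _).trans (by rw [abs_mul]; gcongr; exact abs_real_inner_le_norm u w)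
    _ ≤ |η| * (‖u‖ * (c * ‖u‖)) := by gcongr
    _ = (|η| * c) * ‖u‖ ^ 2 := by ring
    _ ≤ (1/2) * (η^2 + c^2) * ‖u‖^2 :=
        mul_le_mul_of_nonneg_right (by nlinarith [sq_abs η, sq_nonneg (|η| - c)]) (sq_nonneg _)

theorem stmt_7_general {Ω : Type*} [MeasurableSpace Ω] (μ : Measure Ω)
    [IsProbabilityMeasure μ]
    {E : Type*} [NormedAddCommGroup E] [InnerProductSpace ℝ E] [CompleteSpace E]
    (G : Ω → E) (hG : Integrable G μ)
    (hG2 : Integrable (fun ω => ‖G ω‖^2) μ)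
    (v : E) (η c : ℝ)
    (h : ‖v - ∫ ω, G ω ∂μ‖ ≤ c * ‖∫ ω, G ω ∂μ‖) :
    ∫ ω, η * (inner ℝ (G ω) (v - ∫ ω', G ω' ∂μ) : ℝ) ∂μ ≤
      (1/2) * (η^2 + c^2) * ∫ ω, ‖G ω‖^2 ∂μ := by
  rw [integral_const_mul]
  simp_rw [real_inner_comm (v - ∫ ω', G ω' ∂μ)]
  rw [integral_inner hG, real_inner_comm]
  calc _ ≤ (1/2) * (η^2 + c^2) * ‖∫ ω, G ω ∂μ‖ ^ 2 := mul_inner_le_of_norm_le_mul_norm h η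
    _ ≤ _ := by gcongr; exact sq_norm_integral_le_integral_sq_norm hG hG2

/-- Precise measure-theoretic form of Proposition 1: the per-round increase of
the generalization gap is bounded by (1/2)(η² + c²)·E‖G‖². -/
theorem stmt_7 {Ω : Type*} [MeasurableSpace Ω] (μ : Measure Ω)
    [IsProbabilityMeasure μ]
    {E : Type*} [NormedAddCommGroup E] [InnerProductSpace ℝ E] [CompleteSpace E]
    (G : Ω → E) (hG : Integrable G μ)
    (hG2 : Integrable (fun ω => ‖G ω‖^2) μ)
    (v : E) (η c : ℝ) (hc : 0 ≤ c)
    (h : ‖v - ∫ ω, G ω ∂μ‖ ≤ c * ‖∫ ω, G ω ∂μ‖) :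
    ∫ ω, η * (inner ℝ (G ω) (v - ∫ ω', G ω' ∂μ) : ℝ) ∂μ ≤
      (1/2) * (η^2 + c^2) * ∫ ω, ‖G ω‖^2 ∂μ :=
  stmt_7_general μ G hG hG2 v η c h
end

section
/- Let E be a real inner product space, f : E → ℝ, and f′ : E → E such that f has gradient f′ x at every point x (HasGradientAt f (f′ x) x), f′ is Lipschitz with constant L > 0, and f x ≥ f⋆ for all x and some real f⋆. Let η > 0 satisfy η·L ≤ 1/2, and let ω, ω̃ : ℕ → E be sequences with ω (s+1) = ω s − η • f′ (ω̃ s) for all s. Then for every natural number S, (1/(S+1))·∑_{s=0}^{S} ‖f′ (ω̃ s)‖² ≤ 4·(f (ω 0) − f⋆)/(η·(S+1)) + (2·L²/(S+1))·∑_{s=0}^{S} ‖ω s − ω̃ s‖². -/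
/-!
Along the segment from `x` to `x + v` the Lipschitz gradient gives the quadratic upper bound
`f (x + v) ≤ f x + ⟪f' x, v⟫ + L/2 ‖v‖²`. Applied to the step `v = -η f'(ω̃)` taken from `ω`,
and using `‖f' ω - f' ω̃‖ ≤ L ‖ω - ω̃‖` together with `η L ≤ 1/2`, each round decreases `f` by
at least `η/2 ‖f' ω̃‖² - η L² ‖ω - ω̃‖²`. Summing over the rounds telescopes, and `f ≥ f⋆`
bounds the total decrease.
-/

open InnerProductSpace
open scoped NNReal

section GradientDescent

variable {E : Type*} [NormedAddCommGroup E] [InnerProductSpace ℝ E] [CompleteSpace E]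
  {f : E → ℝ} {f' : E → E} {K : ℝ≥0}

theorem le_add_inner_add_of_lipschitzWith_gradient (hgrad : ∀ x, HasGradientAt f (f' x) x)
    (hlip : LipschitzWith K f') (x v : E) :
    f (x + v) ≤ f x + ⟪f' x, v⟫_ℝ + K / 2 * ‖v‖ ^ 2 := by
  have hline : ∀ t : ℝ, HasDerivAt (fun t : ℝ ↦ f (x + t • v)) ⟪f' (x + t • v), v⟫_ℝ t := by
    intro t
    have hpath : HasDerivAt (fun t : ℝ ↦ x + t • v) v t := by
      simpa using ((hasDerivAt_id t).smul_const v).const_add x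
    have := (hgrad (x + t • v)).hasFDerivAt.comp_hasDerivAt t hpath
    simp only [toDual_apply_apply] at this
    exact this
  have hbound : ∀ t : ℝ, HasDerivAt (fun t : ℝ ↦ f x + t * ⟪f' x, v⟫_ℝ + K / 2 * t ^ 2 * ‖v‖ ^ 2)
      (⟪f' x, v⟫_ℝ + K * t * ‖v‖ ^ 2) t := by
    intro t
    exact ((((hasDerivAt_id t).mul_const ⟪f' x, v⟫_ℝ).const_add (f x)).add
      (((hasDerivAt_pow 2 t).const_mul ((K : ℝ) / 2)).mul_const (‖v‖ ^ 2))).congr_deriv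
      (by push_cast; ring)
  have hslope : ∀ t ∈ Set.Ico (0 : ℝ) 1,
      ⟪f' (x + t • v), v⟫_ℝ ≤ ⟪f' x, v⟫_ℝ + K * t * ‖v‖ ^ 2 := by
    rintro t ⟨ht, -⟩
    have hgap : ‖f' (x + t • v) - f' x‖ ≤ K * (t * ‖v‖) := by
      simpa [← dist_eq_norm, norm_smul, abs_of_nonneg ht] using hlip.dist_le_mul (x + t • v) x
    calc ⟪f' (x + t • v), v⟫_ℝ = ⟪f' x, v⟫_ℝ + ⟪f' (x + t • v) - f' x, v⟫_ℝ := by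
          rw [inner_sub_left]; ring
      _ ≤ ⟪f' x, v⟫_ℝ + ‖f' (x + t • v) - f' x‖ * ‖v‖ := by gcongr; exact real_inner_le_norm _ _
      _ ≤ ⟪f' x, v⟫_ℝ + K * (t * ‖v‖) * ‖v‖ := by gcongr
      _ = ⟪f' x, v⟫_ℝ + K * t * ‖v‖ ^ 2 := by ring
  simpa using image_le_of_deriv_right_le_deriv_boundary
    (fun t _ ↦ (hline t).continuousAt.continuousWithinAt)
    (fun t _ ↦ (hline t).hasDerivWithinAt) (by simp)
    (fun t _ ↦ (hbound t).continuousAt.continuousWithinAt)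
    (fun t _ ↦ (hbound t).hasDerivWithinAt) hslope (Set.right_mem_Icc.2 zero_le_one)

theorem half_mul_norm_sq_le_of_gradient_step (hgrad : ∀ x, HasGradientAt f (f' x) x)
    (hlip : LipschitzWith K f') {η : ℝ} (hη : 0 ≤ η) (hηK : η * K ≤ 1 / 2) (x z : E) :
    η / 2 * ‖f' z‖ ^ 2 ≤ f x - f (x - η • f' z) + η * K ^ 2 * ‖x - z‖ ^ 2 := by
  have hdescent := le_add_inner_add_of_lipschitzWith_gradient hgrad hlip x (-(η • f' z))
  rw [← sub_eq_add_neg, inner_neg_right, real_inner_smul_right, norm_neg, norm_smul,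
    Real.norm_eq_abs, abs_of_nonneg hη] at hdescent
  have hinner : ‖f' z‖ ^ 2 - K * ‖x - z‖ * ‖f' z‖ ≤ ⟪f' x, f' z⟫_ℝ := by
    have hgap : ‖f' x - f' z‖ ≤ K * ‖x - z‖ := by
      simpa [dist_eq_norm] using hlip.dist_le_mul x z
    have hcross : -(‖f' x - f' z‖ * ‖f' z‖) ≤ ⟪f' x - f' z, f' z⟫_ℝ :=
      (abs_le.mp (abs_real_inner_le_norm _ _)).1
    rw [inner_sub_left, real_inner_self_eq_norm_sq] at hcross
    nlinarith [norm_nonneg (f' z)]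
  -- `η K ‖x - z‖ ‖f' z‖ ≤ η (‖f' z‖² / 4 + K² ‖x - z‖²)` and `K η² ≤ η / 2`
  nlinarith [mul_le_mul_of_nonneg_left hinner hη,
    mul_nonneg hη (sq_nonneg (‖f' z‖ / 2 - K * ‖x - z‖)),
    mul_le_mul_of_nonneg_right hηK (mul_nonneg hη (sq_nonneg ‖f' z‖))]

theorem sum_norm_sq_gradient_le_of_gradient_steps (hgrad : ∀ x, HasGradientAt f (f' x) x)
    (hlip : LipschitzWith K f') {η : ℝ} (hη : 0 ≤ η) (hηK : η * K ≤ 1 / 2) {ω ωt : ℕ → E}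
    (hupd : ∀ s, ω (s + 1) = ω s - η • f' (ωt s)) (S : ℕ) :
    η / 2 * ∑ s ∈ Finset.range (S + 1), ‖f' (ωt s)‖ ^ 2 ≤
      f (ω 0) - f (ω (S + 1)) + η * K ^ 2 * ∑ s ∈ Finset.range (S + 1), ‖ω s - ωt s‖ ^ 2 := by
  rw [Finset.mul_sum, Finset.mul_sum, ← Finset.sum_range_sub' (fun s ↦ f (ω s)),
    ← Finset.sum_add_distrib]
  refine Finset.sum_le_sum fun s _ ↦ ?_
  rw [hupd s]
  exact half_mul_norm_sq_le_of_gradient_step hgrad hlip hη hηK (ω s) (ωt s)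

end GradientDescent

/-- Deterministic full-gradient analogue of Theorem 1 for federated edge
learning with model pruning. -/
theorem stmt_15 {E : Type*} [NormedAddCommGroup E] [InnerProductSpace ℝ E]
    [CompleteSpace E]
    (f : E → ℝ) (f' : E → E) (L : ℝ) (hL : 0 < L)
    (hgrad : ∀ x, HasGradientAt f (f' x) x)
    (hlip : LipschitzWith (Real.toNNReal L) f')
    (fstar : ℝ) (hbound : ∀ x, fstar ≤ f x)
    (η : ℝ) (hη : 0 < η) (hηL : η * L ≤ 1/2)
    (ω ωt : ℕ → E) (hupd : ∀ s, ω (s+1) = ω s - η • f' (ωt s)) :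
    ∀ S : ℕ,
      (1/((S:ℝ)+1)) * ∑ s ∈ Finset.range (S+1), ‖f' (ωt s)‖^2 ≤
        4 * (f (ω 0) - fstar) / (η * ((S:ℝ)+1)) +
          (2 * L^2 / ((S:ℝ)+1)) * ∑ s ∈ Finset.range (S+1), ‖ω s - ωt s‖^2 := by
  intro S
  have hL' : (Real.toNNReal L : ℝ) = L := Real.coe_toNNReal L hL.le
  have hsum := sum_norm_sq_gradient_le_of_gradient_steps hgrad hlip hη.le (by rwa [hL']) hupd S
  rw [hL'] at hsum
  have hgap : 0 ≤ f (ω 0) - fstar := sub_nonneg.2 (hbound (ω 0))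
  have hlast := hbound (ω (S + 1))
  set A := ∑ s ∈ Finset.range (S + 1), ‖f' (ωt s)‖ ^ 2
  set D := ∑ s ∈ Finset.range (S + 1), ‖ω s - ωt s‖ ^ 2
  calc 1 / ((S : ℝ) + 1) * A = η * A / (η * ((S : ℝ) + 1)) := by field_simp
    _ ≤ (4 * (f (ω 0) - fstar) + 2 * η * L ^ 2 * D) / (η * ((S : ℝ) + 1)) := by
        gcongr; linarith
    _ = _ := by field_simp
end
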